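/- arXiv:2605.02790 — 3 statements merged into one kernel-verified Lean document; each statement's English description precedes it below -/
import Mathlib

section
/- Let C_safe, ttd, ka, ke, Vd : ℝ with 0 < ke < ka, 0 < Vd, 0 < C_safe, and ttd ≥ t* where t* := Real.log (ka / ke) / (ka - ke). Let conc : ℝ → ℝ → ℝ be conc D t = (D * ka / (Vd * (ka - ke))) * (Real.exp (-ke * t) - Real.exp (-ka * t)). Let net : ℝ → ℝ be a function (the neural controller) satisfying: (i) for all c with 0 ≤ c ≤ C_safe, 0 ≤ net c, and (ii) for all c with 0 ≤ c ≤ C_safe, c + conc (net c) t* ≤ C_safe. Define doses : ℕ → ℝ and total : ℕ → ℝ → ℝ recursively by doses 0 = net c₀ for an initial value 0 ≤ c₀ ≤ C_safe, total n t = ∑_{i=0}^{n} max 0 (conc (doses i) (t - ttd * i)), and doses (n+1) = net (total n (ttd * (n+1))). Then for every n and every t : ℝ, 0 ≤ total n t ≤ C_safe. -/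
/-!
Each dose contributes a multiple of the Bateman curve `exp (-ke t) - exp (-ka t)`, which vanishes
before the dose, rises up to its peak at `t*` and decays afterwards. Since `ttd ≥ t*`, at every
time after the latest dose all earlier contributions are already decaying, so the total is at
most its value at the moment of that dose plus the peak of the newest contribution, which the
controller specification bounds by `C_safe`. Induction on the number of doses concludes.
-/

open Real Set Finset

structure IsSingleDoseProfile (f : ℝ → ℝ) (tp : ℝ) : Prop where
  nonpos_of_nonpos : ∀ t ≤ 0, f t ≤ 0
  le_peak : ∀ t, f t ≤ f tp
  antitoneOn : AntitoneOn f (Ici tp)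

theorem IsSingleDoseProfile.const_mul {f : ℝ → ℝ} {tp a : ℝ} (hf : IsSingleDoseProfile f tp)
    (ha : 0 ≤ a) : IsSingleDoseProfile (fun t => a * f t) tp where
  nonpos_of_nonpos t ht := mul_nonpos_of_nonneg_of_nonpos ha (hf.nonpos_of_nonpos t ht)
  le_peak t := mul_le_mul_of_nonneg_left (hf.le_peak t) ha
  antitoneOn _ hs _ ht hst := mul_le_mul_of_nonneg_left (hf.antitoneOn hs ht hst) ha

section Bateman

noncomputable def bateman (ke ka t : ℝ) : ℝ := exp (-ke * t) - exp (-ka * t)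

variable {ke ka : ℝ}

theorem bateman_nonpos_of_nonpos (hka : ke ≤ ka) {t : ℝ} (ht : t ≤ 0) : bateman ke ka t ≤ 0 :=
  sub_nonpos.mpr (exp_le_exp.mpr (by nlinarith))

theorem hasDerivAt_bateman (t : ℝ) :
    HasDerivAt (bateman ke ka) (ka * exp (-ka * t) - ke * exp (-ke * t)) t := by
  have h := (((hasDerivAt_id t).const_mul (-ke)).exp).sub ((hasDerivAt_id t).const_mul (-ka)).exp
  exact h.congr_deriv (by simp only [id, mul_one]; ring)

theorem continuous_bateman : Continuous (bateman ke ka) :=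
  continuous_iff_continuousAt.mpr fun t => (hasDerivAt_bateman t).continuousAt

variable (hke : 0 < ke) (hka : ke < ka)
include hke hka

/-- The sign of the derivative of `bateman ke ka`. -/
theorem mul_exp_le_mul_exp_iff {t : ℝ} :
    ke * exp (-ke * t) ≤ ka * exp (-ka * t) ↔ t ≤ log (ka / ke) / (ka - ke) := by
  have hsplit : ke * exp (-ke * t) = ke * exp ((ka - ke) * t) * exp (-ka * t) := by
    rw [mul_assoc, ← exp_add]
    congr 2
    ring
  rw [hsplit, mul_le_mul_iff_left₀ (exp_pos _), ← le_div_iff₀' hke,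
    ← le_log_iff_exp_le (div_pos (hke.trans hka) hke), le_div_iff₀ (sub_pos.mpr hka), mul_comm]

theorem monotoneOn_bateman : MonotoneOn (bateman ke ka) (Iic (log (ka / ke) / (ka - ke))) := by
  refine monotoneOn_of_deriv_nonneg (convex_Iic _) continuous_bateman.continuousOn
    (fun t _ => (hasDerivAt_bateman t).differentiableAt.differentiableWithinAt) fun t ht => ?_
  rw [interior_Iic] at ht
  rw [(hasDerivAt_bateman t).deriv, sub_nonneg]
  exact (mul_exp_le_mul_exp_iff hke hka).mpr (le_of_lt ht)

theorem antitoneOn_bateman : AntitoneOn (bateman ke ka) (Ici (log (ka / ke) / (ka - ke))) := by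
  refine antitoneOn_of_deriv_nonpos (convex_Ici _) continuous_bateman.continuousOn
    (fun t _ => (hasDerivAt_bateman t).differentiableAt.differentiableWithinAt) fun t ht => ?_
  rw [interior_Ici] at ht
  rw [(hasDerivAt_bateman t).deriv, sub_nonpos]
  exact (not_le.mp (mt (mul_exp_le_mul_exp_iff hke hka).mp (not_le.mpr ht))).le

theorem isSingleDoseProfile_bateman :
    IsSingleDoseProfile (bateman ke ka) (log (ka / ke) / (ka - ke)) where
  nonpos_of_nonpos _ ht := bateman_nonpos_of_nonpos hka.le ht
  le_peak t := by
    rcases le_total t (log (ka / ke) / (ka - ke)) with h | h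
    · exact monotoneOn_bateman hke hka h self_mem_Iic h
    · exact antitoneOn_bateman hke hka self_mem_Ici h h
  antitoneOn := antitoneOn_bateman hke hka

end Bateman

section Superposition

def superposition (r : ℝ → ℝ → ℝ) (ttd : ℝ) (doses : ℕ → ℝ) (n : ℕ) (t : ℝ) : ℝ :=
  ∑ i ∈ range (n + 1), max 0 (r (doses i) (t - ttd * i))

variable {r : ℝ → ℝ → ℝ} {tp ttd : ℝ} {doses : ℕ → ℝ} {n : ℕ}

theorem superposition_nonneg (t : ℝ) : 0 ≤ superposition r ttd doses n t :=
  sum_nonneg fun _ _ => le_max_left _ _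

theorem superposition_succ (t : ℝ) :
    superposition r ttd doses (n + 1) t =
      superposition r ttd doses n t + max 0 (r (doses (n + 1)) (t - ttd * (n + 1))) := by
  rw [superposition, sum_range_succ, ← superposition]
  push_cast
  rfl

variable (hr : ∀ D, 0 ≤ D → IsSingleDoseProfile (r D) tp)
include hr

theorem superposition_succ_of_le (hd : 0 ≤ doses (n + 1)) {t : ℝ} (ht : t ≤ ttd * (n + 1)) :
    superposition r ttd doses (n + 1) t = superposition r ttd doses n t := by
  rw [superposition_succ, max_eq_left ((hr _ hd).nonpos_of_nonpos _ (by linarith)), add_zero]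

/-- Once all `n + 1` doses have been given, every contribution is past its peak. -/
theorem antitoneOn_superposition (htp : tp ≤ ttd) (httd : 0 ≤ ttd)
    (hd : ∀ i ≤ n, 0 ≤ doses i) :
    AntitoneOn (superposition r ttd doses n) (Ici (ttd * (n + 1))) := by
  intro s hs t _ hst
  refine sum_le_sum fun i hi => max_le_max le_rfl ?_
  have hin : (i : ℝ) + 1 ≤ n + 1 := by exact_mod_cast mem_range.mp hi
  have hpast : tp ≤ s - ttd * i := by nlinarith [mem_Ici.mp hs]
  exact (hr _ (hd i (mem_range_succ_iff.mp hi))).antitoneOn hpast (hpast.trans (by linarith))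
    (by linarith)

theorem superposition_succ_le {C : ℝ} (htp : tp ≤ ttd) (httd : 0 ≤ ttd)
    (hd : ∀ i ≤ n + 1, 0 ≤ doses i) (hC : ∀ t, superposition r ttd doses n t ≤ C)
    (hsafe : superposition r ttd doses n (ttd * (n + 1)) + r (doses (n + 1)) tp ≤ C) (t : ℝ) :
    superposition r ttd doses (n + 1) t ≤ C := by
  rcases le_total t (ttd * (n + 1)) with ht | ht
  · rw [superposition_succ_of_le hr (hd _ le_rfl) ht]
    exact hC t
  have hdecay : superposition r ttd doses n t ≤ superposition r ttd doses n (ttd * (n + 1)) :=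
    antitoneOn_superposition hr htp httd (fun i hi => hd i (hi.trans n.le_succ))
      self_mem_Ici ht ht
  rw [superposition_succ, add_max, add_zero]
  exact max_le (hC t) (by linarith [(hr _ (hd _ le_rfl)).le_peak (t - ttd * (n + 1))])

theorem superposition_mem_Icc {net : ℝ → ℝ} {C c₀ : ℝ} (htp : tp ≤ ttd) (httd : 0 ≤ ttd)
    (hnet_nonneg : ∀ c, 0 ≤ c → c ≤ C → 0 ≤ net c)
    (hnet_safe : ∀ c, 0 ≤ c → c ≤ C → c + r (net c) tp ≤ C)
    (hc₀ : 0 ≤ c₀) (hc₀' : c₀ ≤ C) (hdoses0 : doses 0 = net c₀)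
    (hdosesS : ∀ n, doses (n + 1) = net (superposition r ttd doses n (ttd * (n + 1))))
    (n : ℕ) (t : ℝ) : superposition r ttd doses n t ∈ Icc 0 C := by
  suffices h : (∀ i ≤ n, 0 ≤ doses i) ∧ ∀ t, superposition r ttd doses n t ≤ C from
    ⟨superposition_nonneg t, h.2 t⟩
  induction n with
  | zero =>
    have hd0 : 0 ≤ doses 0 := hdoses0 ▸ hnet_nonneg c₀ hc₀ hc₀'
    refine ⟨fun i hi => Nat.le_zero.mp hi ▸ hd0, fun t => ?_⟩
    have hsafe := hdoses0 ▸ hnet_safe c₀ hc₀ hc₀'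
    rw [superposition, sum_range_one]
    exact max_le (by linarith) (((hr _ hd0).le_peak _).trans (by linarith))
  | succ n ih =>
    obtain ⟨hd, hC⟩ := ih
    have hnow : 0 ≤ superposition r ttd doses n (ttd * (n + 1)) := superposition_nonneg _
    have hdn : 0 ≤ doses (n + 1) := hdosesS n ▸ hnet_nonneg _ hnow (hC _)
    have hd' : ∀ i ≤ n + 1, 0 ≤ doses i := fun i hi =>
      (Nat.le_succ_iff.mp hi).elim (hd i) (fun h => h ▸ hdn)
    exact ⟨hd', superposition_succ_le hr htp httd hd' hC
      (hdosesS n ▸ hnet_safe _ hnow (hC _))⟩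

end Superposition

theorem doses_safe_general (C_safe ttd ka ke Vd : ℝ)
    (hke : 0 < ke) (hka : ke < ka) (hVd : 0 < Vd)
    (httd : Real.log (ka / ke) / (ka - ke) ≤ ttd)
    (conc : ℝ → ℝ → ℝ)
    (hconc : ∀ D t, conc D t =
      (D * ka / (Vd * (ka - ke))) * (Real.exp (-ke * t) - Real.exp (-ka * t)))
    (net : ℝ → ℝ)
    (hnet_nonneg : ∀ c, 0 ≤ c → c ≤ C_safe → 0 ≤ net c)
    (hnet_safe : ∀ c, 0 ≤ c → c ≤ C_safe →
      c + conc (net c) (Real.log (ka / ke) / (ka - ke)) ≤ C_safe)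
    (c₀ : ℝ) (hc₀ : 0 ≤ c₀) (hc₀' : c₀ ≤ C_safe)
    (doses : ℕ → ℝ) (total : ℕ → ℝ → ℝ)
    (hdoses0 : doses 0 = net c₀)
    (htotal : ∀ n t, total n t =
      ∑ i ∈ Finset.range (n + 1), max 0 (conc (doses i) (t - ttd * i)))
    (hdosesS : ∀ n, doses (n + 1) = net (total n (ttd * (n + 1)))) :
    ∀ (n : ℕ) (t : ℝ), 0 ≤ total n t ∧ total n t ≤ C_safe := by
  have hks : 0 < ka - ke := sub_pos.mpr hka
  have hpeak_nonneg : 0 ≤ log (ka / ke) / (ka - ke) :=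
    div_nonneg (log_nonneg ((one_le_div hke).mpr hka.le)) hks.le
  have hprofile : ∀ D, 0 ≤ D → IsSingleDoseProfile (conc D) (log (ka / ke) / (ka - ke)) := by
    intro D hD
    rw [funext (hconc D)]
    exact (isSingleDoseProfile_bateman hke hka).const_mul
      (div_nonneg (mul_nonneg hD (hke.trans hka).le) (mul_pos hVd hks).le)
  obtain rfl : total = superposition conc ttd doses := funext₂ htotal
  exact superposition_mem_Icc hprofile httd (hpeak_nonneg.trans httd) hnet_nonneg hnet_safe
    hc₀ hc₀' hdoses0 hdosesS

theorem doses_safe (C_safe ttd ka ke Vd : ℝ)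
    (hke : 0 < ke) (hka : ke < ka) (hVd : 0 < Vd) (hCs : 0 < C_safe)
    (httd : Real.log (ka / ke) / (ka - ke) ≤ ttd)
    (conc : ℝ → ℝ → ℝ)
    (hconc : ∀ D t, conc D t =
      (D * ka / (Vd * (ka - ke))) * (Real.exp (-ke * t) - Real.exp (-ka * t)))
    (net : ℝ → ℝ)
    (hnet_nonneg : ∀ c, 0 ≤ c → c ≤ C_safe → 0 ≤ net c)
    (hnet_safe : ∀ c, 0 ≤ c → c ≤ C_safe →
      c + conc (net c) (Real.log (ka / ke) / (ka - ke)) ≤ C_safe)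
    (c₀ : ℝ) (hc₀ : 0 ≤ c₀) (hc₀' : c₀ ≤ C_safe)
    (doses : ℕ → ℝ) (total : ℕ → ℝ → ℝ)
    (hdoses0 : doses 0 = net c₀)
    (htotal : ∀ n t, total n t =
      ∑ i ∈ Finset.range (n + 1), max 0 (conc (doses i) (t - ttd * i)))
    (hdosesS : ∀ n, doses (n + 1) = net (total n (ttd * (n + 1)))) :
    ∀ (n : ℕ) (t : ℝ), 0 ≤ total n t ∧ total n t ≤ C_safe :=
  doses_safe_general C_safe ttd ka ke Vd hke hka hVd httd conc hconc net hnet_nonneg hnet_safe c₀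
    hc₀ hc₀' doses total hdoses0 htotal hdosesS
end

section
/- Consider a discrete-time car model: a state consists of real numbers (windSpeed, position, velocity, sensor), an observation consists of real numbers (windShift, sensorError) with |windShift| ≤ 1 and |sensorError| ≤ 1/4. The state update is: windSpeed' = windSpeed + windShift, position' = position + velocity + windSpeed', sensor' = position' + sensorError, velocity' = velocity + ctrl (sensor', sensor), where ctrl : ℝ × ℝ → ℝ is a controller satisfying: for all x₀ x₁ with |x₀| ≤ 13/4 and |x₁| ≤ 13/4, |ctrl (x₀, x₁) + 2*x₀ - x₁| < 5/4. Suppose the invariant holds for the current state s: |s.position| ≤ 3, |s.position + s.velocity + s.windSpeed| ≤ 2, and |s.sensor - s.position| ≤ 1/4. Then for any valid observation o, the updated state s' satisfies the same invariant: |s'.position| ≤ 3, |s'.position + s'.velocity + s'.windSpeed| ≤ 2, and |s'.sensor - s'.position| ≤ 1/4. -/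
structure CarState where
  windSpeed : ℝ
  position : ℝ
  velocity : ℝ
  sensor : ℝ

structure CarObs where
  windShift : ℝ
  sensorError : ℝ

noncomputable def nextState (ctrl : ℝ × ℝ → ℝ) (o : CarObs) (s : CarState) : CarState :=
  let windSpeed' := s.windSpeed + o.windShift
  let position' := s.position + s.velocity + windSpeed'
  let sensor' := position' + o.sensorError
  let velocity' := s.velocity + ctrl (sensor', s.sensor)
  ⟨windSpeed', position', velocity', sensor'⟩

theorem invariant_preserved (ctrl : ℝ × ℝ → ℝ)
    (hctrl : ∀ x₀ x₁ : ℝ, |x₀| ≤ 13/4 → |x₁| ≤ 13/4 →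
      |ctrl (x₀, x₁) + 2 * x₀ - x₁| < 5/4)
    (s : CarState)
    (hpos : |s.position| ≤ 3)
    (hdrift : |s.position + s.velocity + s.windSpeed| ≤ 2)
    (hsens : |s.sensor - s.position| ≤ 1/4)
    (o : CarObs) (hw : |o.windShift| ≤ 1) (he : |o.sensorError| ≤ 1/4) :
    |(nextState ctrl o s).position| ≤ 3 ∧
      |(nextState ctrl o s).position + (nextState ctrl o s).velocity +
        (nextState ctrl o s).windSpeed| ≤ 2 ∧
      |(nextState ctrl o s).sensor - (nextState ctrl o s).position| ≤ 1/4 := by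
  simp only [nextState]
  rw [abs_le] at hpos hdrift hsens hw he
  have hpos' : |s.position + s.velocity + (s.windSpeed + o.windShift)| ≤ 3 := by
    rw [abs_le]; constructor <;> linarith
  have hs' : |s.position + s.velocity + (s.windSpeed + o.windShift) + o.sensorError| ≤ 13/4 := by
    rw [abs_le] at hpos' ⊢; constructor <;> linarith [hpos'.1, hpos'.2]
  have hsen : |s.sensor| ≤ 13/4 := by
    rw [abs_le]; constructor <;> linarith
  have hc := hctrl _ _ hs' hsen
  rw [abs_lt] at hc
  rw [abs_le] at hpos'
  refine ⟨by rw [abs_le]; exact hpos', ?_, ?_⟩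
  · rw [abs_le]; constructor <;> nlinarith [hc.1, hc.2]
  · rw [abs_le]; constructor <;> linarith
end

section
/- Consider the discrete-time car model with states (windSpeed, position, velocity, sensor), initial state (0,0,0,0), valid observations (windShift, sensorError) satisfying |windShift| ≤ 1 and |sensorError| ≤ 1/4, the update rule windSpeed' = windSpeed + windShift, position' = position + velocity + windSpeed', sensor' = position' + sensorError, velocity' = velocity + ctrl (sensor', sensor), and a controller ctrl : ℝ × ℝ → ℝ satisfying |ctrl (x₀, x₁) + 2*x₀ - x₁| < 5/4 whenever |x₀| ≤ 13/4 and |x₁| ≤ 13/4. Then for every finite list of valid observations, the final state obtained by folding the update rule over the list from the initial state satisfies |position| ≤ 3. -/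
/-! The strengthened invariant `|position| ≤ 3`, `|position + velocity + windSpeed| ≤ 2`,
`|sensor - position| ≤ 1/4` is preserved by every valid step. It keeps both sensor readings fed to
the controller within `13/4`, so the specification applies; after the step,
`position + velocity + windSpeed` equals the controller's error term (`< 5/4`) minus twice the new
sensor error (`≤ 1/2`) plus the old sensor offset (`≤ 1/4`), which restores the bound `2`. -/

/-- The paper's neural-network specification `ψ` on the controller. -/
def ControllerSpec (ctrl : ℝ × ℝ → ℝ) : Prop :=
  ∀ x₀ x₁ : ℝ, |x₀| ≤ 13/4 → |x₁| ≤ 13/4 → |ctrl (x₀, x₁) + 2 * x₀ - x₁| < 5/4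

def CarObs.Valid (o : CarObs) : Prop :=
  |o.windShift| ≤ 1 ∧ |o.sensorError| ≤ 1/4

def CarState.Invariant (s : CarState) : Prop :=
  |s.position| ≤ 3 ∧ |s.position + s.velocity + s.windSpeed| ≤ 2 ∧ |s.sensor - s.position| ≤ 1/4

theorem CarState.invariant_zero : CarState.Invariant ⟨0, 0, 0, 0⟩ := by
  norm_num [CarState.Invariant]

theorem CarState.Invariant.abs_sensor_le {s : CarState} (hs : s.Invariant) :
    |s.sensor| ≤ 13/4 :=
  calc |s.sensor| = |(s.sensor - s.position) + s.position| := by rw [sub_add_cancel]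
    _ ≤ |s.sensor - s.position| + |s.position| := abs_add_le _ _
    _ ≤ 13/4 := by linarith [hs.1, hs.2.2]

theorem CarState.Invariant.nextState {ctrl : ℝ × ℝ → ℝ} (hctrl : ControllerSpec ctrl)
    {o : CarObs} (ho : o.Valid) {s : CarState} (hs : s.Invariant) :
    (nextState ctrl o s).Invariant := by
  have hsensor := hs.abs_sensor_le
  obtain ⟨hw, he⟩ := ho
  obtain ⟨-, hpvw, hsp⟩ := hs
  set p' := s.position + s.velocity + (s.windSpeed + o.windShift)
  set c := ctrl (p' + o.sensorError, s.sensor)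
  have hp' : |p'| ≤ 3 :=
    calc |p'| = |(s.position + s.velocity + s.windSpeed) + o.windShift| := by rw [add_assoc]
      _ ≤ |s.position + s.velocity + s.windSpeed| + |o.windShift| := abs_add_le _ _
      _ ≤ 3 := by linarith
  have hsensor' : |p' + o.sensorError| ≤ 13/4 :=
    (abs_add_le _ _).trans (by linarith)
  have hc : |c + 2 * (p' + o.sensorError) - s.sensor| < 5/4 :=
    hctrl _ _ hsensor' hsensor
  have hpvw' : p' + (s.velocity + c) + (s.windSpeed + o.windShift) =
      (c + 2 * (p' + o.sensorError) - s.sensor) - 2 * o.sensorError +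
        (s.sensor - s.position) := by
    ring
  refine ⟨hp', ?_, by simpa [_root_.nextState] using he⟩
  change |p' + (s.velocity + c) + (s.windSpeed + o.windShift)| ≤ 2
  rw [hpvw', abs_le]
  rw [abs_lt] at hc
  rw [abs_le] at he hsp
  constructor <;> linarith [hc.1, hc.2, he.1, he.2, hsp.1, hsp.2]

theorem system_safety (ctrl : ℝ × ℝ → ℝ)
    (hctrl : ∀ x₀ x₁ : ℝ, |x₀| ≤ 13/4 → |x₁| ≤ 13/4 →
      |ctrl (x₀, x₁) + 2 * x₀ - x₁| < 5/4)
    (xs : List CarObs)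
    (hvalid : ∀ o ∈ xs, |o.windShift| ≤ 1 ∧ |o.sensorError| ≤ 1/4) :
    |(xs.foldr (nextState ctrl) ⟨0, 0, 0, 0⟩).position| ≤ 3 :=
  (xs.foldrRecOn (motive := CarState.Invariant) (nextState ctrl) CarState.invariant_zero
    fun _ hs o ho => hs.nextState hctrl (hvalid o ho)).1
end
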